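/- Let G = G₀(u) ⋄ H(u) be a connected non-odd-bipartite k-uniform hypergraph (k even) with H odd-bipartite. Then λ_min(G) ≤ k·ε(G₀)/ν(G), where ε(G₀) is the number of edges of G₀ and ν(G) the number of vertices of G. -/

import Mathlib

open Finset

structure UHG (V : Type) [DecidableEq V] [Fintype V] (k : ℕ) where
  edges : Finset (Finset V)
  uniform : ∀ e ∈ edges, e.card = k

namespace UHG

variable {V : Type} [DecidableEq V] [Fintype V] {k : ℕ}

/-- The vertices of the hypergraph: all vertices covered by some edge. -/
def verts (G : UHG V k) : Finset V := G.edges.biUnion id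

/-- The set of edges containing a given vertex. -/
def incEdges (G : UHG V k) (v : V) : Finset (Finset V) :=
  G.edges.filter fun e => v ∈ e

/-- The degree of a vertex. -/
def deg (G : UHG V k) (v : V) : ℕ := (G.incEdges v).card

/-- Two vertices are adjacent if some edge contains both. -/
def Adj (G : UHG V k) (u v : V) : Prop := ∃ e ∈ G.edges, u ∈ e ∧ v ∈ e

/-- A hypergraph is connected if any two of its vertices are joined by a walk. -/
def Connected (G : UHG V k) : Prop :=
  G.verts.Nonempty ∧ ∀ u ∈ G.verts, ∀ v ∈ G.verts, Relation.ReflTransGen G.Adj u v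

/-- A hypergraph is odd-bipartite if there is a set `U` of vertices such that
every edge meets `U` in an odd number of vertices (the bipartition is `{U, V \ U}`). -/
def OddBipartite (G : UHG V k) : Prop :=
  ∃ U : Finset V, ∀ e ∈ G.edges, Odd (e ∩ U).card

/-- The signless Laplacian form `Q(G) x^k = ∑_{e ∈ E} (∑_{v∈e} x_v^k + k ∏_{v∈e} x_v)`. -/
def Qform (G : UHG V k) (x : V → ℝ) : ℝ :=
  ∑ e ∈ G.edges, ((∑ v ∈ e, x v ^ k) + (k : ℝ) * ∏ v ∈ e, x v)

/-- The H-eigenvector equation for the signless Laplacian tensor: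
`(λ - d(v)) x_v^{k-1} = ∑_{e ∋ v} ∏_{w ∈ e \ {v}} x_w` for every vertex `v`. -/
def eigenEq (G : UHG V k) (lam : ℝ) (x : V → ℝ) : Prop :=
  ∀ v : V, (lam - (G.deg v : ℝ)) * x v ^ (k - 1) =
    ∑ e ∈ G.incEdges v, ∏ w ∈ e.erase v, x w

/-- The least H-eigenvalue of the signless Laplacian tensor. -/
noncomputable def lamMin (G : UHG V k) : ℝ :=
  sInf {lam : ℝ | ∃ x : V → ℝ, x ≠ 0 ∧ G.eigenEq lam x}

/-- A first eigenvector: an H-eigenvector associated with the least H-eigenvalue. -/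
def IsFirstEigenvector (G : UHG V k) (x : V → ℝ) : Prop :=
  x ≠ 0 ∧ G.eigenEq G.lamMin x

/-- `G` is the coalescence `G₀(u) ⋄ H(u)`: its edges are the disjoint union of the
edges of `G₀` and `H`, which share only the vertex `u`. -/
def IsCoalescence (G G₀ H : UHG V k) (u : V) : Prop :=
  G.edges = G₀.edges ∪ H.edges ∧ Disjoint G₀.edges H.edges ∧
  G₀.verts ∩ H.verts ⊆ {u} ∧ u ∈ G₀.verts ∧ u ∈ H.verts

end UHG

/-!
For even `k` the form `Q(G)` is nonnegative (AM–GM on each edge), so the H-eigenvalues are bounded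
below, and `λ_min(G) ∑ y_v^k ≤ Q(G) y` for every `y ≠ 0`: a minimiser of `Q(G)` on the sphere
through `y` is an H-eigenvector by Lagrange multipliers, and every eigenpair satisfies
`λ ∑ x_v^k = Q(G) x`.

Test this with a `±1` vector `y`, so that `∑ y_v^k = |V| ≥ ν(G)`. On `H` take the sign vector of
one side of an odd bipartition: each edge of `H` then contributes `k - k = 0`. On `G₀` take the
sign vector of a set `T` meeting at least half of the edges of `G₀` in an odd number of vertices
(such a `T` exists by averaging over all `T`): the odd edges contribute `0` and the others `2k`,
so `G₀` contributes at most `k ε(G₀)`. Multiplying the `H` part by `±1` changes no product over an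
edge, since `k` is even, and makes the two parts agree at `u`.
-/

section SignVector

variable {V : Type} [DecidableEq V]

def signVec (T : Finset V) (v : V) : ℝ := if v ∈ T then -1 else 1

lemma prod_signVec (T e : Finset V) : ∏ v ∈ e, signVec T v = (-1) ^ #(e ∩ T) := by
  simp [signVec]

lemma signVec_pow_of_even {k : ℕ} (hk : Even k) (T : Finset V) (v : V) :
    signVec T v ^ k = 1 := by
  unfold signVec; split_ifs <;> simp [hk.neg_one_pow]

lemma signVec_mul_self (T : Finset V) (v : V) : signVec T v * signVec T v = 1 := by
  unfold signVec; split_ifs <;> norm_num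

variable [Fintype V]

lemma sum_powerset_prod_signVec_eq_zero {e : Finset V} (he : e.Nonempty) :
    ∑ T ∈ univ.powerset, ∏ v ∈ e, signVec T v = 0 := by
  obtain ⟨v₀, hv₀⟩ := he
  have hswap : ∀ T : Finset V, ∏ v ∈ e, signVec T v = ∏ v ∈ T, signVec e v := fun T => by
    rw [prod_signVec, prod_signVec, inter_comm]
  simp_rw [hswap, ← prod_one_add]
  exact prod_eq_zero (mem_univ v₀) (by simp [signVec, hv₀])

/-- The conclusion says that `T` meets at least half of the members of `E` in an odd number of
points. -/
lemma exists_sum_prod_signVec_nonpos (E : Finset (Finset V)) (hE : ∀ e ∈ E, e.Nonempty) :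
    ∃ T : Finset V, ∑ e ∈ E, ∏ v ∈ e, signVec T v ≤ 0 := by
  have htotal : ∑ T ∈ univ.powerset, ∑ e ∈ E, ∏ v ∈ e, signVec T v
      = ∑ T ∈ (univ : Finset V).powerset, (0 : ℝ) := by
    rw [sum_comm, sum_const_zero]
    exact sum_eq_zero fun e he => sum_powerset_prod_signVec_eq_zero (hE e he)
  obtain ⟨T, -, hT⟩ := exists_le_of_sum_le (powerset_nonempty _) htotal.le
  exact ⟨T, hT⟩

end SignVector

lemma card_mul_abs_prod_le_sum_pow {ι : Type*} (s : Finset ι) (x : ι → ℝ) :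
    #s * |∏ i ∈ s, x i| ≤ ∑ i ∈ s, |x i| ^ #s := by
  rcases s.eq_empty_or_nonempty with rfl | hs
  · simp
  have hn : (#s : ℝ) ≠ 0 := by exact_mod_cast hs.card_pos.ne'
  have amgm := Real.geom_mean_le_arith_mean_weighted s (fun _ => (#s : ℝ)⁻¹)
    (fun i => |x i| ^ #s) (fun _ _ => by positivity) (by simp [hn])
    (fun _ _ => by positivity)
  simp only [Real.pow_rpow_inv_natCast (abs_nonneg _) hs.card_pos.ne', ← mul_sum] at amgm
  rw [abs_prod]
  calc (#s : ℝ) * ∏ i ∈ s, |x i| ≤ #s * ((#s : ℝ)⁻¹ * ∑ i ∈ s, |x i| ^ #s) := by gcongr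
    _ = ∑ i ∈ s, |x i| ^ #s := by field_simp

section PowerSums

variable {V : Type} [Fintype V] {k : ℕ}

lemma sum_pow_pos (hk : Even k) {x : V → ℝ} (hx : x ≠ 0) : 0 < ∑ v, x v ^ k := by
  obtain ⟨v, hv⟩ := Function.ne_iff.mp hx
  exact sum_pos' (fun w _ => hk.pow_nonneg (x w)) ⟨v, mem_univ v, hk.pow_pos hv⟩

lemma isCompact_sum_pow_eq (hk : Even k) (hk0 : 0 < k) (c : ℝ) :
    IsCompact {x : V → ℝ | ∑ v, x v ^ k = c} := by
  refine Metric.isCompact_of_isClosed_isBounded (isClosed_eq (by fun_prop) continuous_const) ?_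
  refine isBounded_iff_forall_norm_le.mpr ⟨max 1 c, fun x hx => ?_⟩
  refine (pi_norm_le_iff_of_nonneg (le_max_of_le_left zero_le_one)).mpr fun v => ?_
  rw [Real.norm_eq_abs]
  rcases le_or_gt |x v| 1 with h1 | h1
  · exact le_max_of_le_left h1
  refine le_max_of_le_right ?_
  calc |x v| ≤ |x v| ^ k := le_self_pow₀ h1.le hk0.ne'
    _ = x v ^ k := hk.pow_abs (x v)
    _ ≤ c := hx ▸ single_le_sum (fun w _ => hk.pow_nonneg (x w)) (mem_univ v)

abbrev coord (v : V) : (V → ℝ) →L[ℝ] ℝ := ContinuousLinearMap.proj v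

lemma hasStrictFDerivAt_apply_pow (v : V) (m : ℕ) (x : V → ℝ) :
    HasStrictFDerivAt (fun x : V → ℝ => x v ^ m) ((m * x v ^ (m - 1)) • coord v) x :=
  (hasStrictDerivAt_pow m (x v)).comp_hasStrictFDerivAt x (hasStrictFDerivAt_apply v x)

lemma hasStrictFDerivAt_sum_pow (x : V → ℝ) :
    HasStrictFDerivAt (fun x : V → ℝ => ∑ v, x v ^ k) (∑ v, (k * x v ^ (k - 1)) • coord v) x :=
  .fun_sum fun v _ => hasStrictFDerivAt_apply_pow v k x

lemma sum_smul_coord_apply_single [DecidableEq V] (c : V → ℝ) (v : V) :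
    (∑ w, c w • coord w : (V → ℝ) →L[ℝ] ℝ) (Pi.single v 1) = c v := by
  simp [Pi.single_apply]

end PowerSums

namespace UHG

variable {V : Type} [DecidableEq V] [Fintype V] {k : ℕ} (G : UHG V k)

lemma subset_verts {e : Finset V} (he : e ∈ G.edges) : e ⊆ G.verts :=
  fun _ hv => mem_biUnion.mpr ⟨e, he, hv⟩

lemma mem_incEdges {v : V} {e : Finset V} : e ∈ G.incEdges v ↔ e ∈ G.edges ∧ v ∈ e :=
  mem_filter

lemma sum_sum_incEdges {M : Type*} [AddCommMonoid M] (f : Finset V → V → M) :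
    ∑ v, ∑ e ∈ G.incEdges v, f e v = ∑ e ∈ G.edges, ∑ v ∈ e, f e v :=
  sum_comm' fun v e => by simp [mem_incEdges, and_comm]

lemma continuous_Qform : Continuous G.Qform := by
  unfold Qform; fun_prop

lemma Qform_smul (c : ℝ) (x : V → ℝ) : G.Qform (c • x) = c ^ k * G.Qform x := by
  simp only [Qform, Pi.smul_apply, smul_eq_mul, mul_pow, prod_mul_distrib, prod_const, mul_sum]
  refine sum_congr rfl fun e he => ?_
  rw [G.uniform e he, ← mul_sum]
  ring

lemma Qform_eq_of_forall_pow_eq_one {x : V → ℝ} (hx : ∀ v, x v ^ k = 1) :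
    G.Qform x = k * (#G.edges + ∑ e ∈ G.edges, ∏ v ∈ e, x v) := by
  simp only [Qform, hx, sum_const, nsmul_eq_mul, mul_one, sum_add_distrib, mul_add, mul_sum]
  congr 1
  rw [sum_congr rfl fun e he => by rw [G.uniform e he], sum_const, nsmul_eq_mul, mul_comm]

lemma Qform_signVec_eq_zero (hk : Even k) {U : Finset V}
    (hU : ∀ e ∈ G.edges, Odd #(e ∩ U)) : G.Qform (signVec U) = 0 := by
  rw [G.Qform_eq_of_forall_pow_eq_one (signVec_pow_of_even hk U),
    sum_congr rfl fun e he => by rw [prod_signVec, (hU e he).neg_one_pow]]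
  simp

lemma Qform_nonneg (hk : Even k) (x : V → ℝ) : 0 ≤ G.Qform x := by
  refine sum_nonneg fun e he => ?_
  have := card_mul_abs_prod_le_sum_pow e x
  simp only [G.uniform e he, hk.pow_abs] at this
  nlinarith [neg_abs_le (∏ v ∈ e, x v), (Nat.cast_nonneg k : (0 : ℝ) ≤ k)]

lemma hasStrictFDerivAt_Qform (x : V → ℝ) :
    HasStrictFDerivAt G.Qform (∑ v, ((k : ℝ) * (G.deg v * x v ^ (k - 1) +
      ∑ e ∈ G.incEdges v, ∏ w ∈ e.erase v, x w)) • coord v) x := by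
  have hQ : HasStrictFDerivAt G.Qform (∑ e ∈ G.edges, ∑ v ∈ e,
      ((k : ℝ) * (x v ^ (k - 1) + ∏ w ∈ e.erase v, x w)) • coord v) x := by
    refine .fun_sum fun e _ => ?_
    refine ((HasStrictFDerivAt.fun_sum (u := e) fun v _ => hasStrictFDerivAt_apply_pow v k x).add
      ((HasStrictFDerivAt.finsetProd (u := e) fun v _ => hasStrictFDerivAt_apply v x).const_mul
        (k : ℝ))).congr_fderiv ?_
    simp only [smul_sum, smul_smul, ← sum_add_distrib, ← add_smul, mul_add, coord]
  convert hQ using 1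
  rw [← G.sum_sum_incEdges]
  simp only [deg, mul_add, add_smul, sum_add_distrib, mul_sum, sum_smul, sum_const,
    ← Nat.cast_smul_eq_nsmul ℝ, smul_smul, mul_left_comm]

variable {G}

lemma eigenEq.mul_sum_pow_eq_Qform (hk0 : 0 < k) {lam : ℝ} {x : V → ℝ} (h : G.eigenEq lam x) :
    lam * ∑ v, x v ^ k = G.Qform x := by
  have hv : ∀ v, lam * x v ^ k = ∑ e ∈ G.incEdges v, (x v ^ k + ∏ w ∈ e, x w) := fun v => by
    have := congrArg (· * x v) (h v)
    simp only [mul_assoc, pow_sub_one_mul hk0.ne', sum_mul] at this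
    rw [sum_congr rfl fun e he => prod_erase_mul e x (G.mem_incEdges.mp he).2] at this
    rw [sum_add_distrib, sum_const, nsmul_eq_mul]
    unfold deg at this
    linarith
  rw [mul_sum, sum_congr rfl fun v _ => hv v, sum_sum_incEdges, Qform]
  refine sum_congr rfl fun e he => ?_
  rw [sum_add_distrib, sum_const, G.uniform e he, nsmul_eq_mul]

lemma eigenEq.nonneg (hk : Even k) (hk0 : 0 < k) {lam : ℝ} {x : V → ℝ} (h : G.eigenEq lam x)
    (hx : x ≠ 0) : 0 ≤ lam := by
  have := h.mul_sum_pow_eq_Qform hk0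
  exact nonneg_of_mul_nonneg_left (this ▸ G.Qform_nonneg hk x) (sum_pow_pos hk hx)

lemma exists_eigenEq_of_isMinOn (hk0 : 0 < k) {x : V → ℝ} (hx : x ≠ 0)
    (hmin : IsMinOn G.Qform {y | ∑ v, y v ^ k = ∑ v, x v ^ k} x) : ∃ lam, G.eigenEq lam x := by
  obtain ⟨a, b, hab, hlin⟩ := IsLocalExtrOn.exists_multipliers_of_hasStrictFDerivAt_1d
    (Or.inl hmin.localize) (hasStrictFDerivAt_sum_pow x) (G.hasStrictFDerivAt_Qform x)
  have hk : (k : ℝ) ≠ 0 := by exact_mod_cast hk0.ne'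
  have hv : ∀ v, a * x v ^ (k - 1) + b * (G.deg v * x v ^ (k - 1) +
      ∑ e ∈ G.incEdges v, ∏ w ∈ e.erase v, x w) = 0 := fun v => by
    have := congrArg (· (Pi.single v 1)) hlin
    simp only [add_apply, smul_apply, zero_apply, smul_eq_mul, sum_smul_coord_apply_single] at this
    exact (mul_eq_zero.mp (by linear_combination this)).resolve_left hk
  have hb : b ≠ 0 := by
    rintro rfl
    have ha : a ≠ 0 := fun ha => hab (by simp [ha])
    refine hx (funext fun v => ?_)
    have := hv v
    simp only [zero_mul, add_zero, mul_eq_zero, ha, false_or] at this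
    exact eq_zero_of_pow_eq_zero this
  refine ⟨-a / b, fun v => mul_left_cancel₀ hb ?_⟩
  field_simp
  linear_combination -hv v

variable (G)

lemma bddBelow_eigenvalues (hk : Even k) (hk0 : 0 < k) :
    BddBelow {lam : ℝ | ∃ x : V → ℝ, x ≠ 0 ∧ G.eigenEq lam x} :=
  ⟨0, fun _ ⟨_, hx, h⟩ => h.nonneg hk hk0 hx⟩

lemma lamMin_mul_sum_pow_le_Qform (hk : Even k) (hk0 : 0 < k) {y : V → ℝ}
    (hy : y ≠ 0) : G.lamMin * ∑ v, y v ^ k ≤ G.Qform y := by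
  obtain ⟨x, hxS, hmin⟩ := (isCompact_sum_pow_eq hk hk0 (∑ v, y v ^ k)).exists_isMinOn
    (Set.nonempty_of_mem (rfl : ∑ v, y v ^ k = _)) G.continuous_Qform.continuousOn
  have hsum : ∑ v, x v ^ k = ∑ v, y v ^ k := hxS
  have hx : x ≠ 0 := fun h => (sum_pow_pos hk hy).ne' (by simp [← hsum, h, hk0.ne'])
  obtain ⟨lam, hlam⟩ := exists_eigenEq_of_isMinOn hk0 hx (by rwa [hsum])
  calc G.lamMin * ∑ v, y v ^ k ≤ lam * ∑ v, y v ^ k :=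
        mul_le_mul_of_nonneg_right (csInf_le (G.bddBelow_eigenvalues hk hk0) ⟨x, hx, hlam⟩)
          (sum_pow_pos hk hy).le
    _ = G.Qform x := by rw [← hsum, hlam.mul_sum_pow_eq_Qform hk0]
    _ ≤ G.Qform y := hmin (rfl : ∑ v, y v ^ k = _)

end UHG

namespace UHG.IsCoalescence

variable {V : Type} [DecidableEq V] [Fintype V] {k : ℕ} {G G₀ H : UHG V k} {u : V}

lemma mem_verts (hG : G.IsCoalescence G₀ H u) : u ∈ G.verts := by
  obtain ⟨e, he, hue⟩ := mem_biUnion.mp hG.2.2.2.2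
  exact G.subset_verts (hG.1 ▸ mem_union_right _ he) hue

lemma Qform_piecewise (hG : G.IsCoalescence G₀ H u) {x₀ xH : V → ℝ} (hu : xH u = x₀ u) :
    G.Qform (H.verts.piecewise xH x₀) = G₀.Qform x₀ + H.Qform xH := by
  obtain ⟨hedges, hdisj, hmeet, -, -⟩ := hG
  have hG₀ : ∀ e ∈ G₀.edges, ∀ v ∈ e, H.verts.piecewise xH x₀ v = x₀ v := by
    intro e he v hv
    by_cases hvH : v ∈ H.verts
    · obtain rfl : v = u := mem_singleton.mp (hmeet (mem_inter.mpr ⟨G₀.subset_verts he hv, hvH⟩))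
      rw [piecewise_eq_of_mem _ _ _ hvH, hu]
    · exact piecewise_eq_of_notMem _ _ _ hvH
  have hH : ∀ e ∈ H.edges, ∀ v ∈ e, H.verts.piecewise xH x₀ v = xH v :=
    fun e he v hv => piecewise_eq_of_mem _ _ _ (H.subset_verts he hv)
  rw [Qform, hedges, sum_union hdisj, Qform, Qform]
  congr 1 <;> refine sum_congr rfl fun e he => ?_
  · rw [sum_congr rfl fun v hv => by rw [hG₀ e he v hv], prod_congr rfl (hG₀ e he)]
  · rw [sum_congr rfl fun v hv => by rw [hH e he v hv], prod_congr rfl (hH e he)]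

end UHG.IsCoalescence

theorem stmt15_general {V : Type} [DecidableEq V] [Fintype V] {k : ℕ}
    (hk : Even k) (hk0 : 0 < k) (G G₀ H : UHG V k) (u : V)
    (hcoal : UHG.IsCoalescence G G₀ H u) (hH : H.OddBipartite) :
    G.lamMin ≤ (k : ℝ) * G₀.edges.card / G.verts.card := by
  obtain ⟨U, hU⟩ := hH
  obtain ⟨T, hT⟩ := exists_sum_prod_signVec_nonpos G₀.edges
    fun e he => card_pos.mp (G₀.uniform e he ▸ hk0)
  set c := signVec T u * signVec U u
  have hc : c ^ k = 1 := by rw [mul_pow, signVec_pow_of_even hk, signVec_pow_of_even hk, one_mul]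
  set y := H.verts.piecewise (c • signVec U) (signVec T)
  have hy : ∀ v, y v ^ k = 1 := fun v => by
    by_cases hv : v ∈ H.verts <;> simp [y, hv, mul_pow, hc, signVec_pow_of_even hk]
  have hQ : G.Qform y ≤ k * #G₀.edges := by
    rw [hcoal.Qform_piecewise (by simp [c, mul_assoc, signVec_mul_self]), H.Qform_smul,
      H.Qform_signVec_eq_zero hk hU, G₀.Qform_eq_of_forall_pow_eq_one (signVec_pow_of_even hk T)]
    nlinarith [(Nat.cast_nonneg k : (0 : ℝ) ≤ k)]
  have hV : 0 < #G.verts := card_pos.mpr ⟨u, hcoal.mem_verts⟩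
  have hbound := G.lamMin_mul_sum_pow_le_Qform hk hk0 (y := y)
    fun h => by simpa [h, hk0.ne'] using hy u
  simp only [hy, sum_const, card_univ, nsmul_eq_mul, mul_one] at hbound
  calc G.lamMin ≤ k * #G₀.edges / Fintype.card V :=
        (le_div_iff₀ (by exact_mod_cast hV.trans_le (card_le_univ _))).mpr (hbound.trans hQ)
    _ ≤ k * #G₀.edges / #G.verts := by
        gcongr
        exact card_le_univ _

/-- Let `G = G₀(u) ⋄ H(u)` be a connected non-odd-bipartite `k`-uniform
hypergraph (`k` even) with `H` odd-bipartite. Then `λ_min(G) ≤ k ε(G₀) / ν(G)`. -/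
theorem stmt15 {V : Type} [DecidableEq V] [Fintype V] {k : ℕ}
    (hk : Even k) (hk0 : 0 < k) (G G₀ H : UHG V k) (u : V)
    (hcoal : UHG.IsCoalescence G G₀ H u) (hH : H.OddBipartite)
    (hconn : G.Connected) (hnob : ¬ G.OddBipartite) :
    G.lamMin ≤ (k : ℝ) * G₀.edges.card / G.verts.card :=
  stmt15_general hk hk0 G G₀ H u hcoal hH
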